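/- The boundary of the Guthrie-Nymann set X has Lebesgue measure zero. -/

import Mathlib

open MeasureTheory

/-- The Guthrie-Nymann set. -/
def GN : Set ℝ :=
  {x | ∃ α : ℕ → ℝ, (∀ n, α n ∈ ({0, 2, 3, 5} : Set ℝ)) ∧
    HasSum (fun n => α n / 4 ^ (n + 1)) x}

/-! Since `{0, 2, 3, 5}` is a complete residue system modulo 4, every `(j + 2/3) / 4 ^ n` in
`[2/3, 1]` has an expansion, and `[2/3, 1] ⊆ GN` by closedness. Hence a point whose expansion
contains the digit block `3 0` at position `m` lies in a copy of `(2/3, 1)` scaled by `4⁻ᵐ` inside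
`GN`, so in the interior. Boundary points therefore have expansions avoiding `3 0`; grouping digits
in pairs, that set is covered by 15 copies of itself scaled by `1/16`, so its (finite) measure is
at most `15/16` of itself, i.e. zero. -/

open Finset Pointwise in
theorem measure_eq_zero_of_subset_biUnion_vadd_smul {E ι : Type*} [NormedAddCommGroup E]
    [NormedSpace ℝ E] [MeasurableSpace E] [BorelSpace E] [FiniteDimensional ℝ E] (μ : Measure E)
    [μ.IsAddHaarMeasure] {s : Set E} (I : Finset ι) (b : ι → E) (r : ℝ)
    (hs : s ⊆ ⋃ i ∈ I, b i +ᵥ r • s) (hr : #I * |r ^ Module.finrank ℝ E| < 1) (hfin : μ s ≠ ⊤) :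
    μ s = 0 := by
  set c : ENNReal := ENNReal.ofReal (#I * |r ^ Module.finrank ℝ E|)
  have hle : μ s ≤ c * μ s :=
    calc μ s ≤ ∑ i ∈ I, μ (b i +ᵥ r • s) := (measure_mono hs).trans (measure_biUnion_finset_le _ _)
      _ = c * μ s := by
        simp only [measure_vadd, Measure.addHaar_smul, sum_const, nsmul_eq_mul, c]
        rw [ENNReal.ofReal_mul (by positivity), ENNReal.ofReal_natCast, mul_assoc]
  have hc : c < 1 := by simpa only [c, ENNReal.ofReal_lt_one] using hr
  by_contra h0
  have hlt := (ENNReal.mul_lt_mul_iff_left h0 hfin).2 hc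
  rw [one_mul] at hlt
  exact hlt.not_ge hle

local notation "𝒟" => ({0, 2, 3, 5} : Set ℝ)

lemma nonneg_of_mem_digits {a : ℝ} (ha : a ∈ 𝒟) : 0 ≤ a := by
  rcases ha with rfl | rfl | rfl | rfl <;> norm_num

lemma le_five_of_mem_digits {a : ℝ} (ha : a ∈ 𝒟) : a ≤ 5 := by
  rcases ha with rfl | rfl | rfl | rfl <;> norm_num

lemma hasSum_div_four_pow_succ (c : ℝ) : HasSum (fun n : ℕ => c / 4 ^ (n + 1)) (c / 3) := by
  have h := (hasSum_geometric_of_lt_one (r := (1 / 4 : ℝ)) (by norm_num) (by norm_num)).mul_left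
    (c / 4)
  rw [show c / 4 * (1 - 1 / 4)⁻¹ = c / 3 by ring] at h
  simpa [pow_succ, div_eq_mul_inv, mul_comm, mul_assoc] using h

lemma summable_digits {α : ℕ → ℝ} (hα : ∀ n, α n ∈ 𝒟) :
    Summable (fun n => α n / 4 ^ (n + 1)) :=
  (hasSum_div_four_pow_succ 5).summable.of_nonneg_of_le
    (fun n => div_nonneg (nonneg_of_mem_digits (hα n)) (by positivity))
    (fun n => by gcongr; exact le_five_of_mem_digits (hα n))

lemma hasSum_digits_iff_tail {α : ℕ → ℝ} {x : ℝ} :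
    HasSum (fun n => α n / 4 ^ (n + 1)) x ↔
      HasSum (fun n => α (n + 1) / 4 ^ (n + 1)) (4 * x - α 0) := by
  rw [← hasSum_nat_add_iff' 1, ← hasSum_mul_left_iff (a₂ := (4 : ℝ)) four_ne_zero,
    Finset.sum_range_one]
  have h4 (n : ℕ) : 4 * (α (n + 1) / 4 ^ (n + 1 + 1)) = α (n + 1) / 4 ^ (n + 1) := by
    rw [pow_succ 4 (n + 1)]; field_simp
  simp only [h4]
  ring_nf

lemma isCompact_GN : IsCompact GN := by
  have : Finite 𝒟 := (Set.toFinite _).to_subtype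
  have hGN : GN = Set.range fun σ : ℕ → 𝒟 => ∑' n, (σ n : ℝ) / 4 ^ (n + 1) := by
    ext x
    constructor
    · rintro ⟨α, hα, hsum⟩
      exact ⟨fun n => ⟨α n, hα n⟩, hsum.tsum_eq⟩
    · rintro ⟨σ, rfl⟩
      exact ⟨fun n => σ n, fun n => (σ n).2, (summable_digits fun n => (σ n).2).hasSum⟩
  rw [hGN]
  refine isCompact_range (continuous_tsum (u := fun n => 5 / 4 ^ (n + 1))
    (fun n => (continuous_subtype_val.comp (continuous_apply n)).div_const _)
    (hasSum_div_four_pow_succ 5).summable fun n σ => ?_)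
  rw [Real.norm_of_nonneg (div_nonneg (nonneg_of_mem_digits (σ n).2) (by positivity))]
  gcongr
  exact le_five_of_mem_digits (σ n).2

lemma GN_subset_Icc : GN ⊆ Set.Icc 0 (5 / 3) := by
  rintro x ⟨α, hα, hsum⟩
  exact ⟨hasSum_le (fun n => div_nonneg (nonneg_of_mem_digits (hα n)) (by positivity))
      hasSum_zero hsum,
    hasSum_le (fun n => by gcongr; exact le_five_of_mem_digits (hα n)) hsum
      (hasSum_div_four_pow_succ 5)⟩

lemma add_div_four_mem_GN {a y : ℝ} (ha : a ∈ 𝒟) (hy : y ∈ GN) : (a + y) / 4 ∈ GN := by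
  obtain ⟨α, hα, hsum⟩ := hy
  refine ⟨fun n => Nat.casesOn n a α, fun n => Nat.casesOn n ha hα, ?_⟩
  refine hasSum_digits_iff_tail.2 ?_
  show HasSum _ (4 * ((a + y) / 4) - a)
  rwa [show 4 * ((a + y) / 4) - a = y by ring]

lemma two_thirds_mem_GN : (2 / 3 : ℝ) ∈ GN :=
  ⟨fun _ => 2, fun _ => by norm_num, hasSum_div_four_pow_succ 2⟩

-- The hypotheses on `j` say `(j + 2/3) / 4 ^ n ∈ [2/3, 1]`.
lemma nat_add_div_pow_mem_GN (n j : ℕ) (h1 : 2 * 4 ^ n ≤ 3 * j + 2) (h2 : j + 1 ≤ 4 ^ n)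
    {y : ℝ} (hy : y ∈ GN) : ((j : ℝ) + y) / 4 ^ n ∈ GN := by
  induction n generalizing j y with
  | zero =>
    obtain rfl : j = 0 := by omega
    simpa using hy
  | succ n ih =>
    have h3 : 4 ^ n % 3 = 1 := by simp [Nat.pow_mod]
    rw [pow_succ] at h1 h2
    -- the digits `{0, 2, 3, 5}` form a complete residue system modulo 4
    obtain ⟨a, m, ha, rfl, hm1, hm2⟩ : ∃ a m : ℕ, (a : ℝ) ∈ 𝒟 ∧ j = 4 * m + a ∧
        2 * 4 ^ n ≤ 3 * m + 2 ∧ m + 1 ≤ 4 ^ n := by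
      rcases (by omega : j % 4 = 0 ∨ j % 4 = 1 ∨ j % 4 = 2 ∨ j % 4 = 3) with h | h | h | h
      · exact ⟨0, j / 4, by norm_num, by omega, by omega, by omega⟩
      · exact ⟨5, j / 4 - 1, by norm_num, by omega, by omega, by omega⟩
      · exact ⟨2, j / 4, by norm_num, by omega, by omega, by omega⟩
      · exact ⟨3, j / 4, by norm_num, by omega, by omega, by omega⟩
    convert ih m hm1 hm2 (add_div_four_mem_GN ha hy) using 1
    rw [pow_succ]
    push_cast
    field_simp
    ring

lemma Icc_subset_GN : Set.Icc (2 / 3) 1 ⊆ GN := by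
  intro t ⟨ht1, ht2⟩
  refine isCompact_GN.isClosed.closure_subset (Metric.mem_closure_iff.2 fun ε hε => ?_)
  obtain ⟨n, hn⟩ := exists_pow_lt_of_lt_one hε (by norm_num : (1 / 4 : ℝ) < 1)
  set j := ⌊(4 : ℝ) ^ n * t - 2 / 3⌋₊
  have hq : (0 : ℝ) < 4 ^ n := by positivity
  have hj1 : (j : ℝ) ≤ 4 ^ n * t - 2 / 3 :=
    Nat.floor_le (by nlinarith [one_le_pow₀ (by norm_num : (1 : ℝ) ≤ 4) (n := n)])
  have hj2 : 4 ^ n * t - 2 / 3 < j + 1 := Nat.lt_floor_add_one _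
  have h3 : 4 ^ n % 3 = 1 := by simp [Nat.pow_mod]
  have hlo : 2 * 4 ^ n < 3 * j + 2 + 3 := by
    have : (2 * 4 ^ n : ℝ) < 3 * j + 2 + 3 := by nlinarith
    exact_mod_cast this
  have hhi : j < 4 ^ n := by
    have : (j : ℝ) < 4 ^ n := by nlinarith
    exact_mod_cast this
  refine ⟨_, nat_add_div_pow_mem_GN n j (by omega) (by omega) two_thirds_mem_GN, ?_⟩
  calc dist t (((j : ℝ) + 2 / 3) / 4 ^ n) = |(4 ^ n * t - (j + 2 / 3)) / 4 ^ n| := by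
        rw [Real.dist_eq, sub_div, mul_div_cancel_left₀ t hq.ne']
    _ = |4 ^ n * t - (j + 2 / 3)| / 4 ^ n := by rw [abs_div, abs_of_pos hq]
    _ ≤ 1 / 4 ^ n := by
        gcongr
        rw [abs_le]
        constructor <;> linarith
    _ < ε := by simpa using hn

lemma add_div_four_mem_interior_GN {a y : ℝ} (ha : a ∈ 𝒟) (hy : y ∈ interior GN) :
    (a + y) / 4 ∈ interior GN := by
  rw [mem_interior_iff_mem_nhds] at hy ⊢
  have hcont : ContinuousAt (fun x : ℝ => 4 * x - a) ((a + y) / 4) := by fun_prop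
  have hy' : interior GN ∈ nhds (4 * ((a + y) / 4) - a) := by
    rw [show 4 * ((a + y) / 4) - a = y by ring]; exact interior_mem_nhds.2 hy
  filter_upwards [hcont.preimage_mem_nhds hy'] with x hx
  simpa using add_div_four_mem_GN ha (interior_subset hx)

def AvoidsThreeZero (α : ℕ → ℝ) : Prop := ∀ n, ¬(α n = 3 ∧ α (n + 1) = 0)

lemma mem_interior_GN_of_three_zero {α : ℕ → ℝ} {x : ℝ} (hα : ∀ n, α n ∈ 𝒟)
    (hx : HasSum (fun n => α n / 4 ^ (n + 1)) x) {m : ℕ} (h3 : α m = 3) (h0 : α (m + 1) = 0) :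
    x ∈ interior GN := by
  induction m generalizing α x with
  | zero =>
    have hz := hasSum_digits_iff_tail.1 (hasSum_digits_iff_tail.1 hx)
    obtain ⟨hz0, hz5⟩ := GN_subset_Icc ⟨_, fun n => hα (n + 1 + 1), hz⟩
    -- `x = (3 + z / 4) / 4` with `z ∈ [0, 5/3]`, so `x ∈ [3/4, 41/48] ⊆ (2/3, 1)`
    rw [h3, h0] at hz0 hz5
    have : Set.Ioo (2 / 3 : ℝ) 1 ⊆ interior GN := by
      simpa using interior_mono Icc_subset_GN
    exact this ⟨by linarith, by linarith⟩
  | succ m ih =>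
    have hy := ih (fun n => hα (n + 1)) (hasSum_digits_iff_tail.1 hx) h3 h0
    simpa using add_div_four_mem_interior_GN (hα 0) hy

def threeZeroFreeGN : Set ℝ :=
  {x | ∃ α : ℕ → ℝ, (∀ n, α n ∈ 𝒟) ∧ AvoidsThreeZero α ∧ HasSum (fun n => α n / 4 ^ (n + 1)) x}

lemma threeZeroFreeGN_subset_GN : threeZeroFreeGN ⊆ GN :=
  fun _ ⟨α, hα, _, hx⟩ => ⟨α, hα, hx⟩

lemma frontier_GN_subset_threeZeroFreeGN : frontier GN ⊆ threeZeroFreeGN := by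
  rw [isCompact_GN.isClosed.frontier_eq]
  rintro x ⟨⟨α, hα, hx⟩, hint⟩
  exact ⟨α, hα, fun m hm => hint (mem_interior_GN_of_three_zero hα hx hm.1 hm.2), hx⟩

noncomputable def digitPairsAvoidingThreeZero : Finset (ℝ × ℝ) :=
  (({0, 2, 3, 5} : Finset ℝ) ×ˢ ({0, 2, 3, 5} : Finset ℝ)).erase (3, 0)

lemma card_digitPairsAvoidingThreeZero : digitPairsAvoidingThreeZero.card = 15 := by
  rw [digitPairsAvoidingThreeZero, Finset.card_erase_of_mem (by simp), Finset.card_product]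
  norm_num [Finset.card_insert_of_notMem]

open Pointwise in
lemma threeZeroFreeGN_subset_biUnion :
    threeZeroFreeGN ⊆ ⋃ p ∈ digitPairsAvoidingThreeZero,
      (p.1 / 4 + p.2 / 16) +ᵥ (16⁻¹ : ℝ) • threeZeroFreeGN := by
  rintro x ⟨α, hα, hfree, hx⟩
  have hz := hasSum_digits_iff_tail.1 (hasSum_digits_iff_tail.1 hx)
  refine Set.mem_biUnion (x := (α 0, α 1)) ?_ ?_
  · simpa [digitPairsAvoidingThreeZero, hfree 0] using ⟨hα 0, hα 1⟩
  · refine Set.mem_vadd_set.2 ⟨_, Set.smul_mem_smul_set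
      ⟨_, fun n => hα (n + 1 + 1), fun n => hfree (n + 1 + 1), hz⟩, ?_⟩
    simp only [vadd_eq_add, smul_eq_mul]
    ring

lemma volume_threeZeroFreeGN : volume threeZeroFreeGN = 0 := by
  refine measure_eq_zero_of_subset_biUnion_vadd_smul volume _ _ _ threeZeroFreeGN_subset_biUnion
    ?_ ((measure_mono threeZeroFreeGN_subset_GN).trans_lt isCompact_GN.measure_lt_top).ne
  rw [card_digitPairsAvoidingThreeZero, Module.finrank_self]
  norm_num

theorem GN_frontier_volume_eq_zero : volume (frontier GN) = 0 :=
  measure_mono_null frontier_GN_subset_threeZeroFreeGN volume_threeZeroFreeGN
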